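/- arXiv:1812.03195 — 3 statements merged into one kernel-verified Lean document; each statement's English description precedes it below -/
import Mathlib

section
/- Every claw-free finite simple graph has bipartite pathwidth at most 2; that is, for every vertex subset S of a claw-free graph G such that the induced subgraph G[S] is bipartite, pw(G[S]) ≤ 2. -/
open SimpleGraph

/-- A path decomposition of a simple graph `G`: a nonempty finite sequence of bags
covering all vertices and edges, such that each vertex occurs in an interval of bags. -/
structure PathDecomp {V : Type*} (G : SimpleGraph V) where
  len : ℕ
  len_pos : 0 < len
  bags : Fin len → Finset V
  mem_bag : ∀ v : V, ∃ i, v ∈ bags i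
  edge_bag : ∀ ⦃u v : V⦄, G.Adj u v → ∃ i, u ∈ bags i ∧ v ∈ bags i
  interval : ∀ (v : V) (i j k : Fin len), i ≤ j → j ≤ k →
    v ∈ bags i → v ∈ bags k → v ∈ bags j

/-- The width of a path decomposition: maximum bag size minus one. -/
def PathDecomp.width {V : Type*} {G : SimpleGraph V} (D : PathDecomp G) : ℕ :=
  (Finset.univ.sup fun i => (D.bags i).card) - 1

/-- The pathwidth of a graph: minimum width over all path decompositions. -/
noncomputable def pathwidth {V : Type*} (G : SimpleGraph V) : ℕ :=
  sInf {w : ℕ | ∃ D : PathDecomp G, D.width = w}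

/-- A set of vertices is independent if no two of its members are adjacent. -/
def IndepVertexSet {V : Type*} (G : SimpleGraph V) (A : Set V) : Prop :=
  ∀ ⦃u⦄, u ∈ A → ∀ ⦃v⦄, v ∈ A → ¬ G.Adj u v

/-- A graph is bipartite if its vertex set is partitioned into two independent sets. -/
def IsBipartiteGraph {V : Type*} (G : SimpleGraph V) : Prop :=
  ∃ A B : Set V, A ∪ B = Set.univ ∧ Disjoint A B ∧
    IndepVertexSet G A ∧ IndepVertexSet G B

/-- `G` contains an induced subgraph isomorphic to `H`. -/
def HasInducedCopy {V W : Type*} (G : SimpleGraph V) (H : SimpleGraph W) : Prop :=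
  ∃ S : Set V, Nonempty (G.induce S ≃g H)

/-- The claw `K_{1,3}`. -/
def claw : SimpleGraph (Fin 1 ⊕ Fin 3) := completeBipartiteGraph (Fin 1) (Fin 3)

/-!
A bipartite graph with no induced claw has maximum degree at most 2, since the neighbours of a
vertex are pairwise non-adjacent. A graph of maximum degree at most 2 has a vertex ordering in
which at most two edges join every prefix to the remaining vertices: greedily append a vertex
with a neighbour in the prefix (it loses at least one crossing edge and adds at most one), or any
vertex when no edge leaves the prefix. Giving each vertex the interval from its own position to
the last position of a neighbour turns such an ordering into a path decomposition whose bags are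
the current vertex plus the left ends of crossing edges, hence of size at most 3.
-/

open Finset Function

section PathDecomposition

theorem pathwidth_le_of_card_bags_le {W : Type*} {G : SimpleGraph W} (D : PathDecomp G) {k : ℕ}
    (hD : ∀ i, #(D.bags i) ≤ k + 1) : pathwidth G ≤ k := by
  have hsup : univ.sup (fun i => #(D.bags i)) ≤ k + 1 := Finset.sup_le fun i _ => hD i
  calc pathwidth G ≤ D.width := Nat.sInf_le ⟨D, rfl⟩
    _ ≤ k := by unfold PathDecomp.width; omega

variable {W : Type*} [Fintype W] (G : SimpleGraph W)

/-- Vertex `u` occupies the bags `a u, …, b u`. -/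
def PathDecomp.ofIntervals (a b : W → ℕ) (hab : ∀ u, a u ≤ b u)
    (hadj : ∀ ⦃u v⦄, G.Adj u v → a u ≤ b v) : PathDecomp G where
  len := univ.sup b + 1
  len_pos := Nat.succ_pos _
  bags i := {u | a u ≤ i ∧ (i : ℕ) ≤ b u}
  mem_bag v :=
    ⟨⟨a v, Nat.lt_succ_of_le ((hab v).trans (le_sup (mem_univ v)))⟩, by simp [hab]⟩
  edge_bag u v huv := by
    have hu := le_sup (f := b) (mem_univ u)
    have hv := le_sup (f := b) (mem_univ v)
    have := hadj huv
    have := hadj huv.symm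
    have := hab u
    have := hab v
    refine ⟨⟨max (a u) (a v), by grind⟩, ?_, ?_⟩ <;> simp <;> omega
  interval v i j k hij hjk hi hk := by
    simp only [mem_filter, mem_univ, true_and, Fin.le_iff_val_le_val] at *
    omega

variable {G} [DecidableEq W] [DecidableRel G.Adj]

theorem pathwidth_le_of_rank (r : W → ℕ) (hr : Injective r) {k : ℕ}
    (hcut : ∀ i, #(G.interedges {u | r u < i} {u | i ≤ r u}) ≤ k) : pathwidth G ≤ k := by
  let last u := (insert u (G.neighborFinset u)).sup r
  have hlast : ∀ u, r u ≤ last u := fun u => le_sup (mem_insert_self u _)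
  have hadj : ∀ ⦃u v⦄, G.Adj u v → r u ≤ last v := fun u v huv =>
    le_sup (mem_insert_of_mem ((G.mem_neighborFinset v u).2 huv.symm))
  refine pathwidth_le_of_card_bags_le (.ofIntervals G r last hlast hadj) fun i => ?_
  let cut := G.interedges {u | r u < i} {u | i ≤ r u}
  have hsub : (PathDecomp.ofIntervals G r last hlast hadj).bags i ⊆
      ({u | r u = i} : Finset W) ∪ cut.image Prod.fst := by
    intro u hu
    simp only [PathDecomp.ofIntervals, mem_filter, mem_univ, true_and] at hu
    obtain hi | hi := hu.1.eq_or_lt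
    · simp [hi]
    obtain ⟨w, hw, hlastu⟩ := exists_mem_eq_sup _ (insert_nonempty u (G.neighborFinset u)) r
    have hiw : (i : ℕ) ≤ r w := hlastu ▸ hu.2
    have hwu : w ≠ u := by rintro rfl; omega
    have huw : G.Adj u w := (G.mem_neighborFinset u w).1 ((mem_insert.1 hw).resolve_left hwu)
    refine mem_union_right _ (mem_image.2 ⟨(u, w), ?_, rfl⟩)
    simp only [cut, mk_mem_interedges_iff, mem_filter, mem_univ, true_and]
    exact ⟨hi, by omega, huw⟩
  have hrank : #({u | r u = i} : Finset W) ≤ 1 :=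
    card_le_one.2 fun u hu v hv => hr (by simp only [mem_filter] at hu hv; omega)
  calc _ ≤ #(({u | r u = i} : Finset W) ∪ cut.image Prod.fst) := card_le_card hsub
    _ ≤ 1 + k := (card_union_le _ _).trans (add_le_add hrank (card_image_le.trans (hcut i)))
    _ = k + 1 := add_comm 1 k

end PathDecomposition

namespace SimpleGraph

variable {W : Type*} (G : SimpleGraph W) [DecidableRel G.Adj]

theorem card_interedges_union_left [DecidableEq W] {s₁ s₂ : Finset W} (h : Disjoint s₁ s₂)
    (t : Finset W) :
    #(G.interedges (s₁ ∪ s₂) t) = #(G.interedges s₁ t) + #(G.interedges s₂ t) := by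
  rw [← card_union_of_disjoint (G.interedges_disjoint_left h t)]
  congr 1
  ext
  simp only [mem_interedges_iff, mem_union, or_and_right]

theorem card_interedges_union_right [DecidableEq W] (s : Finset W) {t₁ t₂ : Finset W}
    (h : Disjoint t₁ t₂) :
    #(G.interedges s (t₁ ∪ t₂)) = #(G.interedges s t₁) + #(G.interedges s t₂) := by
  rw [← card_union_of_disjoint (G.interedges_disjoint_right s h)]
  congr 1
  ext
  simp only [mem_interedges_iff, mem_union]
  tauto

theorem card_interedges_comm (s t : Finset W) :
    #(G.interedges s t) = #(G.interedges t s) :=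
  have := G.symm
  Rel.card_interedges_comm s t

theorem card_interedges_singleton_le_degree {x : W} [Fintype (G.neighborSet x)] (t : Finset W) :
    #(G.interedges {x} t) ≤ G.degree x := by
  rw [← card_neighborFinset_eq_degree]
  refine card_le_card_of_injOn Prod.snd (fun e he => ?_) fun e he e' he' hee' => ?_
  · rw [mem_coe, mem_interedges_iff, mem_singleton] at he
    simpa [← he.1] using he.2.2
  · rw [mem_coe, mem_interedges_iff, mem_singleton] at he he'
    exact Prod.ext (he.1.trans he'.1.symm) hee'

variable [Fintype W] [DecidableEq W]

theorem card_interedges_insert_add {A : Finset W} {x : W} (hx : x ∉ A) :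
    #(G.interedges (insert x A) (insert x A)ᶜ) + #(G.interedges {x} A) =
      #(G.interedges A Aᶜ) + #(G.interedges {x} (insert x A)ᶜ) := by
  have hcompl : Aᶜ = {x} ∪ (insert x A)ᶜ := by
    rw [compl_insert, ← insert_eq, insert_erase (mem_compl.2 hx)]
  have hinsert := card_interedges_union_left G (disjoint_singleton_left.2 hx) (insert x A)ᶜ
  have hA := card_interedges_union_right G A
    (disjoint_singleton_left.2 (notMem_compl.2 (mem_insert_self x A)))
  rw [← insert_eq] at hinsert
  rw [← hcompl] at hA
  have := card_interedges_comm G A {x}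
  omega

theorem exists_card_interedges_insert_le_two (hdeg : ∀ v, G.degree v ≤ 2) {A : Finset W}
    (hA : #(G.interedges A Aᶜ) ≤ 2) (hne : Aᶜ.Nonempty) :
    ∃ x ∉ A, #(G.interedges (insert x A) (insert x A)ᶜ) ≤ 2 := by
  have hbound : ∀ x ∉ A,
      #(G.interedges {x} A) + #(G.interedges {x} (insert x A)ᶜ) ≤ 2 := fun x hx => by
    rw [← card_interedges_union_right G {x}
      (disjoint_compl_right.mono_right (compl_subset_compl.2 (subset_insert x A)))]
    exact (G.card_interedges_singleton_le_degree _).trans (hdeg x)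
  by_cases hnbr : ∃ x ∉ A, (G.interedges {x} A).Nonempty
  · obtain ⟨x, hx, hxA⟩ := hnbr
    have := G.card_interedges_insert_add hx
    have := hbound x hx
    have := hxA.card_pos
    exact ⟨x, hx, by omega⟩
  · push Not at hnbr
    have hA0 : G.interedges A Aᶜ = ∅ := eq_empty_of_forall_notMem fun ⟨a, b⟩ hab => by
      rw [mk_mem_interedges_iff] at hab
      have := hnbr b (mem_compl.1 hab.2.1)
      rw [eq_empty_iff_forall_notMem] at this
      exact this (b, a) (by simpa [mk_mem_interedges_iff] using And.intro hab.1 hab.2.2.symm)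
    obtain ⟨x, hx⟩ := hne
    have := G.card_interedges_insert_add (mem_compl.1 hx)
    have := hbound x (mem_compl.1 hx)
    rw [hA0, card_empty] at *
    exact ⟨x, mem_compl.1 hx, by omega⟩

/-- `R` is the set of vertices still to be ranked; they come after all of `Rᶜ`. -/
theorem exists_rank_card_interedges_le_two (hdeg : ∀ v, G.degree v ≤ 2) (R : Finset W)
    (hR : #(G.interedges Rᶜ Rᶜᶜ) ≤ 2) :
    ∃ r : W → ℕ, Set.InjOn r R ∧ ∀ k,
      #(G.interedges {u | u ∉ R ∨ r u < k} {u | u ∈ R ∧ k ≤ r u}) ≤ 2 := by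
  induction R using Finset.strongInduction with
  | H R ih =>
  obtain hR0 | hne := R.eq_empty_or_nonempty
  · refine ⟨fun _ => 0, by simp [hR0], fun k => ?_⟩
    convert hR using 2
    ext
    simp [hR0]
  obtain ⟨x, hx, hxR⟩ := G.exists_card_interedges_insert_le_two hdeg hR (by simpa using hne)
  rw [notMem_compl] at hx
  rw [← compl_erase] at hxR
  obtain ⟨r, hr, hcut⟩ := ih (R.erase x) (erase_ssubset hx) (by simpa using hxR)
  refine ⟨fun u => if u = x then 0 else r u + 1, ?_, ?_⟩
  · intro u hu v hv huv
    by_cases hux : u = x <;> by_cases hvx : v = x <;> simp_all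
    exact hr (by simp [hux, hu]) (by simp [hvx, hv]) huv
  · rintro (_ | k)
    · convert hR using 3 <;> ext <;> simp
    · convert hcut k using 3 <;>
      · ext u
        by_cases hux : u = x <;> simp [hux, hx]

theorem pathwidth_le_two_of_degree_le_two (hdeg : ∀ v, G.degree v ≤ 2) : pathwidth G ≤ 2 := by
  obtain ⟨r, hr, hcut⟩ := G.exists_rank_card_interedges_le_two hdeg univ (by simp)
  exact pathwidth_le_of_rank r (by simpa using hr) fun i => by simpa using hcut i

end SimpleGraph

theorem IsBipartiteGraph.not_adj_of_adj_of_adj {W : Type*} {G : SimpleGraph W}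
    (hG : IsBipartiteGraph G) {v a b : W} (hva : G.Adj v a) (hvb : G.Adj v b) : ¬ G.Adj a b := by
  obtain ⟨A, B, hAB, -, hA, hB⟩ := hG
  have side : ∀ x, x ∈ A ∨ x ∈ B := fun x => Set.mem_union x A B |>.1 (hAB ▸ Set.mem_univ x)
  rcases side v with hv | hv
  · exact hB ((side a).resolve_left fun ha => hA hv ha hva)
      ((side b).resolve_left fun hb => hA hv hb hvb)
  · exact hA ((side a).resolve_right fun ha => hB hv ha hva)
      ((side b).resolve_right fun hb => hB hv hb hvb)

theorem hasInducedCopy_iff_isIndContained {V W : Type*} {G : SimpleGraph V}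
    {H : SimpleGraph W} : HasInducedCopy G H ↔ H ⊴ G :=
  isIndContained_iff_exists_iso_induce.trans
    ⟨fun ⟨S, ⟨e⟩⟩ => ⟨S, ⟨e.symm⟩⟩, fun ⟨S, ⟨e⟩⟩ => ⟨S, ⟨e.symm⟩⟩⟩ |>.symm

theorem claw_isIndContained_of_adj {W : Type*} {G : SimpleGraph W} {v : W} {f : Fin 3 → W}
    (hf : Injective f) (hadj : ∀ i, G.Adj v (f i)) (hindep : ∀ i j, ¬ G.Adj (f i) (f j)) :
    claw ⊴ G := by
  refine ⟨⟨⟨Sum.elim (fun _ => v) f, ?_⟩, ?_⟩⟩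
  · rintro (i | i) (j | j) h
    · exact congrArg _ (Subsingleton.elim i j)
    · exact absurd h (hadj j).ne
    · exact absurd h.symm (hadj i).ne
    · exact congrArg _ (hf h)
  · intro p q
    change G.Adj (Sum.elim (fun _ => v) f p) (Sum.elim (fun _ => v) f q) ↔ _
    rcases p with i | i <;> rcases q with j | j <;> simp [claw, hadj, hindep, (hadj _).symm]

theorem degree_le_two_of_bipartite_of_clawFree {W : Type*} {G : SimpleGraph W}
    (hG : IsBipartiteGraph G) (hclaw : ¬ claw ⊴ G) (v : W) [Fintype (G.neighborSet v)] :
    G.degree v ≤ 2 := by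
  by_contra! hdeg
  obtain ⟨e⟩ : Nonempty (Fin 3 ↪ G.neighborSet v) :=
    Function.Embedding.nonempty_of_card_le
      (by rw [Fintype.card_fin, card_neighborSet_eq_degree]; exact hdeg)
  exact hclaw (claw_isIndContained_of_adj (Subtype.val_injective.comp e.injective)
    (fun i => (e i).2) fun i j => hG.not_adj_of_adj_of_adj (e i).2 (e j).2)

/-- Every claw-free finite simple graph has bipartite pathwidth at most 2:
every induced bipartite subgraph has pathwidth at most 2. -/
theorem clawfree_bipartitePathwidth_le_two {V : Type*} [Fintype V] (G : SimpleGraph V)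
    (hclaw : ¬ HasInducedCopy G claw) :
    ∀ S : Set V, IsBipartiteGraph (G.induce S) → pathwidth (G.induce S) ≤ 2 := by
  intro S hbip
  classical
  have hclawS : ¬ claw ⊴ G.induce S := fun h =>
    hclaw (hasInducedCopy_iff_isIndContained.2 (h.trans (Embedding.induce S).isIndContained))
  exact (G.induce S).pathwidth_le_two_of_degree_le_two fun v =>
    degree_le_two_of_bipartite_of_clawFree hbip hclawS v
end

section
/- Let α ≥ 1 be an integer and let M_0, M_1, …, M_α be positive real numbers satisfying (i+1)·M_{i−1}·M_{i+1} ≤ i·M_i² for all integers i with 1 ≤ i ≤ α − 1. Then for every m ∈ {1, …, α} and every k ∈ {1, …, m}, M_{m−k}/M_m ≤ exp(−(k−1)²/(2m)) · (M_{m−1}/M_m)^k. -/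
/-! Writing `r i = M (i - 1) / M i`, the hypothesis says exactly that `r i / i` is nondecreasing on
`1, …, α`, so `r (m - i) ≤ (1 - i / m) * r m`. Telescoping gives
`M (m - k) / M m ≤ (∏ i < k, (1 - i / m)) * r m ^ k`, and `1 - x ≤ exp (-x)` bounds the product by
`exp (-k (k - 1) / (2 m)) ≤ exp (-(k - 1)² / (2 m))`. -/

open Finset Real

theorem Real.prod_one_sub_le_exp_neg_sum {ι : Type*} (s : Finset ι) (x : ι → ℝ)
    (hx : ∀ i ∈ s, x i ≤ 1) : ∏ i ∈ s, (1 - x i) ≤ exp (-∑ i ∈ s, x i) := by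
  rw [← sum_neg_distrib, exp_sum]
  exact prod_le_prod (fun i hi ↦ sub_nonneg.2 (hx i hi)) fun i _ ↦ one_sub_le_exp_neg (x i)

theorem Real.sum_range_cast_id_mul_two (k : ℕ) :
    (∑ i ∈ range k, (i : ℝ)) * 2 = k * (k - 1) := by
  induction k with
  | zero => simp
  | succ k ih => rw [sum_range_succ, add_mul, ih]; push_cast; ring

section StrongLogConcave

variable {α : ℕ} {M : ℕ → ℝ} (hpos : ∀ i, i ≤ α → 0 < M i)
  (hlc : ∀ i : ℕ, 1 ≤ i → i + 1 ≤ α →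
    ((i : ℝ) + 1) * M (i - 1) * M (i + 1) ≤ (i : ℝ) * (M i) ^ 2)
include hpos hlc

theorem monotoneOn_div_mul_of_strongLogConcave :
    MonotoneOn (fun i : ℕ ↦ M (i - 1) / (i * M i)) (Set.Icc 1 α) := by
  refine monotoneOn_of_le_succ Set.ordConnected_Icc fun i _ hi hi' ↦ ?_
  rw [Order.succ_eq_add_one] at hi' ⊢
  obtain ⟨hi1, -⟩ := hi
  obtain ⟨-, hiα⟩ := hi'
  have := hpos (i - 1) (by omega)
  have := hpos i (by omega)
  have := hpos (i + 1) hiα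
  simp only [Nat.add_sub_cancel, Nat.cast_add, Nat.cast_one]
  rw [div_le_div_iff₀ (by positivity) (by positivity)]
  nlinarith [hlc i hi1 hiα]

theorem div_le_mul_div_of_strongLogConcave {j m : ℕ} (hj : 1 ≤ j) (hjm : j ≤ m) (hm : m ≤ α) :
    M (j - 1) / M j ≤ (j / m) * (M (m - 1) / M m) := by
  have hmono := monotoneOn_div_mul_of_strongLogConcave hpos hlc ⟨hj, hjm.trans hm⟩
    ⟨hj.trans hjm, hm⟩ hjm
  have hm0 : (0 : ℝ) < m := by exact_mod_cast hj.trans hjm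
  have := hpos j (hjm.trans hm)
  have := hpos m hm
  simp only [div_mul_eq_div_div] at hmono
  calc M (j - 1) / M j = j * (M (j - 1) / j / M j) := by field_simp
    _ ≤ j * (M (m - 1) / m / M m) := by gcongr
    _ = (j / m) * (M (m - 1) / M m) := by ring

theorem div_le_prod_one_sub_mul_pow_of_strongLogConcave {m k : ℕ} (hkm : k ≤ m) (hm : m ≤ α) :
    M (m - k) / M m ≤ (∏ i ∈ range k, (1 - i / m : ℝ)) * (M (m - 1) / M m) ^ k := by
  induction k with
  | zero => simp [(hpos m hm).ne']
  | succ k ih =>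
    have hm0 : (0 : ℝ) < m := by exact_mod_cast (show 0 < m by omega)
    have := hpos (m - k) (by omega)
    have := hpos (m - 1) (by omega)
    have := hpos m hm
    have hstep := div_le_mul_div_of_strongLogConcave hpos hlc (j := m - k) (by omega) (by omega) hm
    rw [Nat.cast_sub (by omega : k ≤ m), sub_div, div_self hm0.ne'] at hstep
    have hk : (k : ℝ) / m ≤ 1 := (div_le_one hm0).2 (by exact_mod_cast (by omega : k ≤ m))
    calc M (m - (k + 1)) / M m = M (m - k - 1) / M (m - k) * (M (m - k) / M m) := by
          rw [Nat.sub_sub]; field_simp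
      _ ≤ (1 - k / m) * (M (m - 1) / M m)
            * ((∏ i ∈ range k, (1 - i / m : ℝ)) * (M (m - 1) / M m) ^ k) := by
          gcongr
          exact ih (by omega)
      _ = _ := by rw [prod_range_succ]; ring

end StrongLogConcave

theorem logconcave_ratio_bound_general (α : ℕ) (M : ℕ → ℝ)
    (hpos : ∀ i, i ≤ α → 0 < M i)
    (hlc : ∀ i : ℕ, 1 ≤ i → i + 1 ≤ α →
      ((i : ℝ) + 1) * M (i - 1) * M (i + 1) ≤ (i : ℝ) * (M i) ^ 2) :
    ∀ m : ℕ, 1 ≤ m → m ≤ α → ∀ k : ℕ, 1 ≤ k → k ≤ m →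
      M (m - k) / M m ≤
        Real.exp (-((k : ℝ) - 1) ^ 2 / (2 * m)) * (M (m - 1) / M m) ^ k := by
  intro m hm hmα k hk hkm
  have hm0 : (0 : ℝ) < m := by exact_mod_cast hm
  have hk1 : (1 : ℝ) ≤ k := by exact_mod_cast hk
  have := hpos m hmα
  have := hpos (m - 1) (by omega)
  calc M (m - k) / M m ≤ (∏ i ∈ range k, (1 - i / m : ℝ)) * (M (m - 1) / M m) ^ k :=
        div_le_prod_one_sub_mul_pow_of_strongLogConcave hpos hlc hkm hmα
    _ ≤ exp (-∑ i ∈ range k, (i / m : ℝ)) * (M (m - 1) / M m) ^ k := by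
        gcongr
        refine prod_one_sub_le_exp_neg_sum _ _ fun i hi ↦ (div_le_one hm0).2 ?_
        exact_mod_cast (mem_range.1 hi).le.trans hkm
    _ ≤ exp (-((k : ℝ) - 1) ^ 2 / (2 * m)) * (M (m - 1) / M m) ^ k := by
        gcongr
        rw [← sum_div, neg_div, neg_le_neg_iff, div_le_div_iff₀ (by positivity) hm0]
        nlinarith [sum_range_cast_id_mul_two k]

/-- For positive reals `M_0, …, M_α` satisfying the strengthened
log-concavity condition `(i+1)·M_{i−1}·M_{i+1} ≤ i·M_i²` for `1 ≤ i ≤ α−1`,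
we have `M_{m−k}/M_m ≤ exp(−(k−1)²/(2m))·(M_{m−1}/M_m)^k` for all `1 ≤ k ≤ m ≤ α`. -/
theorem logconcave_ratio_bound (α : ℕ) (hα : 1 ≤ α) (M : ℕ → ℝ)
    (hpos : ∀ i, i ≤ α → 0 < M i)
    (hlc : ∀ i : ℕ, 1 ≤ i → i + 1 ≤ α →
      ((i : ℝ) + 1) * M (i - 1) * M (i + 1) ≤ (i : ℝ) * (M i) ^ 2) :
    ∀ m : ℕ, 1 ≤ m → m ≤ α → ∀ k : ℕ, 1 ≤ k → k ≤ m →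
      M (m - k) / M m ≤
        Real.exp (-((k : ℝ) - 1) ^ 2 / (2 * m)) * (M (m - 1) / M m) ^ k :=
  logconcave_ratio_bound_general α M hpos hlc
end

section
/- Let α ≥ 1 be an integer and let M_0, M_1, …, M_α be positive real numbers satisfying the Newton-type inequalities i(α−i)·M_i² ≥ (i+1)(α−i+1)·M_{i−1}·M_{i+1} for all integers i with 1 ≤ i ≤ α − 1. Let m be an index with M_m = max_{0 ≤ i ≤ α} M_i. Then M_{m−k} ≤ exp(−(k−1)²/(2m))·M_m for every k ∈ {1, …, m}, and M_{m+k} ≤ exp(−(k−1)²/(2(α−m)))·M_m for every k ∈ {1, …, α−m}. -/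
/-!
Newton's inequalities imply, after dropping the factor `(α - i) / (α - i + 1) ≤ 1`, that `i! * M i`
is log-concave. To the left of the maximum this forces `M (j - 1) / M j ≤ j / m`, so
`M (m - k) / M m ≤ ∏_{i < k} (1 - i / m) ≤ exp (-k (k - 1) / (2 m))`. Newton's inequalities are
invariant under `i ↦ α - i`, and the right tail is the left tail of the reversed sequence.
-/

open Real

theorem le_exp_mul_of_mul_succ_le {N : ℝ} (hN : 0 < N) {f : ℕ → ℝ} {K : ℕ}
    (hf : ∀ k < K, 0 ≤ f k) (hstep : ∀ k < K, N * f (k + 1) ≤ (N - k) * f k) :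
    ∀ k ≤ K, f k ≤ exp (-(k * (k - 1)) / (2 * N)) * f 0 := by
  intro k hk
  induction k with
  | zero => simp
  | succ k ih =>
    have hk' : k < K := hk
    have hratio : (N - k) / N ≤ exp (-k / N) := by
      calc (N - k) / N = -k / N + 1 := by field_simp; ring
        _ ≤ exp (-k / N) := add_one_le_exp _
    calc f (k + 1) ≤ (N - k) / N * f k := by
          rw [div_mul_eq_mul_div, le_div_iff₀ hN, mul_comm]; exact hstep k hk'
      _ ≤ exp (-k / N) * (exp (-(k * (k - 1)) / (2 * N)) * f 0) := by
          gcongr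
          · exact hf k hk'
          · exact ih hk'.le
      _ = exp (-((k + 1 : ℕ) * ((k + 1 : ℕ) - 1)) / (2 * N)) * f 0 := by
          rw [← mul_assoc, ← exp_add]
          congr 2
          push_cast
          field_simp
          ring

theorem mul_le_succ_mul_of_succ_mul_mul_le {M : ℕ → ℝ} {m : ℕ} (hpos : ∀ i ≤ m, 0 < M i)
    (hlc : ∀ i, i + 2 ≤ m → (i + 2) * M i * M (i + 2) ≤ (i + 1) * M (i + 1) ^ 2)
    (hmax : ∀ i ≤ m, M i ≤ M m) :
    ∀ j, j + 1 ≤ m → m * M j ≤ (j + 1) * M (j + 1) := by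
  suffices ∀ d j, j + 1 + d = m → m * M j ≤ (j + 1) * M (j + 1) from
    fun j hj => this (m - (j + 1)) j (by omega)
  intro d
  induction d with
  | zero =>
    intro j hjm
    obtain rfl : m = j + 1 := by omega
    push_cast
    exact mul_le_mul_of_nonneg_left (hmax j (by omega)) (by positivity)
  | succ d ih =>
    intro j hjm
    have ih : (m : ℝ) * M (j + 1) ≤ (j + 2) * M (j + 2) := by
      have := ih (j + 1) (by omega); push_cast at this; linarith
    have hj₀ := (hpos j (by omega)).le
    have hj₁ := hpos (j + 1) (by omega)
    have hm : (0 : ℝ) < m := by norm_cast; omega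
    have key : (m * M j) * (m * M (j + 1)) ≤ ((j + 1) * M (j + 1)) * (m * M (j + 1)) :=
      calc (m * M j) * (m * M (j + 1))
          ≤ (m * M j) * ((j + 2) * M (j + 2)) := mul_le_mul_of_nonneg_left ih (by positivity)
        _ = m * ((j + 2) * M j * M (j + 2)) := by ring
        _ ≤ m * ((j + 1) * M (j + 1) ^ 2) := mul_le_mul_of_nonneg_left (hlc j (by omega)) hm.le
        _ = ((j + 1) * M (j + 1)) * (m * M (j + 1)) := by ring
    exact le_of_mul_le_mul_right key (by positivity)

theorem tail_le_exp_mul_of_succ_mul_mul_le {M : ℕ → ℝ} {m : ℕ} (hpos : ∀ i ≤ m, 0 < M i)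
    (hlc : ∀ i, i + 2 ≤ m → (i + 2) * M i * M (i + 2) ≤ (i + 1) * M (i + 1) ^ 2)
    (hmax : ∀ i ≤ m, M i ≤ M m) :
    ∀ k, 1 ≤ k → k ≤ m → M (m - k) ≤ exp (-((k : ℝ) - 1) ^ 2 / (2 * m)) * M m := by
  intro k hk₁ hkm
  have hm : (0 : ℝ) < m := by norm_cast; omega
  have hratio := mul_le_succ_mul_of_succ_mul_mul_le hpos hlc hmax
  have htail := le_exp_mul_of_mul_succ_le (f := fun k => M (m - k)) hm
    (fun k hk => (hpos _ (by omega)).le)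
    (fun k hk => by
      have h := hratio (m - (k + 1)) (by omega)
      rw [show m - (k + 1) + 1 = m - k by omega, Nat.cast_sub (by omega)] at h
      push_cast at h
      linarith) k hkm
  refine htail.trans (mul_le_mul_of_nonneg_right (exp_le_exp.mpr ?_) (hpos m le_rfl).le)
  have hk : (1 : ℝ) ≤ k := by exact_mod_cast hk₁
  gcongr
  nlinarith

def NewtonIneq (α : ℕ) (M : ℕ → ℝ) : Prop :=
  ∀ i : ℕ, 1 ≤ i → i + 1 ≤ α →
    ((i : ℝ) + 1) * ((α : ℝ) - i + 1) * M (i - 1) * M (i + 1) ≤ (i : ℝ) * ((α : ℝ) - i) * M i ^ 2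

namespace NewtonIneq

variable {α : ℕ} {M : ℕ → ℝ}

theorem reverse (h : NewtonIneq α M) : NewtonIneq α (fun i => M (α - i)) := by
  intro i hi₁ hiα
  have hj := h (α - i) (by omega) (by omega)
  rw [show α - i - 1 = α - (i + 1) by omega, show α - i + 1 = α - (i - 1) by omega,
    Nat.cast_sub (by omega)] at hj
  have hcast : ((α : ℝ) - (α - i)) = i := by ring
  rw [hcast] at hj
  linarith

theorem succ_mul_mul_le (h : NewtonIneq α M) {i : ℕ} (hi : i + 2 ≤ α) :
    (i + 2) * M i * M (i + 2) ≤ (i + 1) * M (i + 1) ^ 2 := by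
  have hN := h (i + 1) (by omega) (by omega)
  push_cast at hN
  simp only [add_assoc, one_add_one_eq_two] at hN
  have hα : (0 : ℝ) < α - i := by
    have : (i : ℝ) + 2 ≤ α := by exact_mod_cast hi
    linarith
  refine le_of_mul_le_mul_left ?_ hα
  calc (α - i) * ((i + 2) * M i * M (i + 2))
      = (i + 2) * (α - (i + 1) + 1) * M i * M (i + 2) := by ring
    _ ≤ (i + 1) * (α - (i + 1)) * M (i + 1) ^ 2 := hN
    _ ≤ (α - i) * ((i + 1) * M (i + 1) ^ 2) := by nlinarith [sq_nonneg (M (i + 1))]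

end NewtonIneq

theorem newton_max_tail_bound_general (α : ℕ) (M : ℕ → ℝ)
    (hpos : ∀ i, i ≤ α → 0 < M i)
    (hnewton : ∀ i : ℕ, 1 ≤ i → i + 1 ≤ α →
      ((i : ℝ) + 1) * ((α : ℝ) - i + 1) * M (i - 1) * M (i + 1) ≤
        (i : ℝ) * ((α : ℝ) - i) * (M i) ^ 2)
    (m : ℕ) (hm : m ≤ α) (hmax : ∀ i, i ≤ α → M i ≤ M m) :
    (∀ k : ℕ, 1 ≤ k → k ≤ m →
        M (m - k) ≤ Real.exp (-((k : ℝ) - 1) ^ 2 / (2 * m)) * M m) ∧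
    (∀ k : ℕ, 1 ≤ k → k ≤ α - m →
        M (m + k) ≤ Real.exp (-((k : ℝ) - 1) ^ 2 / (2 * ((α : ℝ) - m))) * M m) := by
  have hN : NewtonIneq α M := hnewton
  refine ⟨tail_le_exp_mul_of_succ_mul_mul_le (fun i hi => hpos i (hi.trans hm))
    (fun i hi => hN.succ_mul_mul_le (hi.trans hm)) (fun i hi => hmax i (hi.trans hm)), ?_⟩
  intro k hk₁ hk
  have hmm : α - (α - m) = m := by omega
  have h := tail_le_exp_mul_of_succ_mul_mul_le (M := fun i => M (α - i)) (m := α - m)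
    (fun i hi => hpos _ (Nat.sub_le _ _))
    (fun i hi => hN.reverse.succ_mul_mul_le (by omega))
    (fun i hi => by simpa only [hmm] using hmax _ (Nat.sub_le _ _)) k hk₁ hk
  simpa only [show α - (α - m - k) = m + k by omega, hmm, Nat.cast_sub hm] using h

/-- For positive reals `M_0, …, M_α` satisfying Newton-type inequalities
`i(α−i)·M_i² ≥ (i+1)(α−i+1)·M_{i−1}·M_{i+1}` for `1 ≤ i ≤ α−1`, if `M_m` is the maximum,
then `M_{m−k} ≤ exp(−(k−1)²/(2m))·M_m` for `1 ≤ k ≤ m` and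
`M_{m+k} ≤ exp(−(k−1)²/(2(α−m)))·M_m` for `1 ≤ k ≤ α−m`. -/
theorem newton_max_tail_bound (α : ℕ) (hα : 1 ≤ α) (M : ℕ → ℝ)
    (hpos : ∀ i, i ≤ α → 0 < M i)
    (hnewton : ∀ i : ℕ, 1 ≤ i → i + 1 ≤ α →
      ((i : ℝ) + 1) * ((α : ℝ) - i + 1) * M (i - 1) * M (i + 1) ≤
        (i : ℝ) * ((α : ℝ) - i) * (M i) ^ 2)
    (m : ℕ) (hm : m ≤ α) (hmax : ∀ i, i ≤ α → M i ≤ M m) :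
    (∀ k : ℕ, 1 ≤ k → k ≤ m →
        M (m - k) ≤ Real.exp (-((k : ℝ) - 1) ^ 2 / (2 * m)) * M m) ∧
    (∀ k : ℕ, 1 ≤ k → k ≤ α - m →
        M (m + k) ≤ Real.exp (-((k : ℝ) - 1) ^ 2 / (2 * ((α : ℝ) - m))) * M m) :=
  newton_max_tail_bound_general α M hpos hnewton m hm hmax
end
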